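/- Let Π be an epistemic program and W a set of interpretations. Then the stable models of the tester program T₀(Π) under the assumption k(W) are exactly the sets M ∪ k(W) for M a stable model of the subjective reduct Π^W; consequently SM(Π^W) equals the restriction of SM(T₀(Π); k(W)) to the atoms of Π. -/

import Mathlib

/-! Framework for (epistemic) logic programs:
objective literals, rules, programs, reducts, stable models,
subjective literals, subjective reducts, worldviews, and the
generate-and-test programs T₀, G₀, kp, G₁. -/

/-- Extended objective literals over an atom type `α`:
an atom, a negated atom, a doubly negated atom, or a truth constant. -/
inductive Lit (α : Type) : Type
  | pos (a : α)
  | neg (a : α)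
  | nneg (a : α)
  | top
  | bot

namespace Lit

/-- Satisfaction of an extended objective literal by an interpretation. -/
def sat {α : Type} (I : Set α) : Lit α → Prop
  | .pos a => a ∈ I
  | .neg a => a ∉ I
  | .nneg a => a ∈ I
  | .top => True
  | .bot => False

/-- A literal is negated if it is of the form `¬a` or `¬¬a`. -/
def isNeg {α : Type} : Lit α → Prop
  | .neg _ => True
  | .nneg _ => True
  | _ => False

/-- Rename atoms in a literal. -/
def map {α β : Type} (f : α → β) : Lit α → Lit β
  | .pos a => .pos (f a)
  | .neg a => .neg (f a)
  | .nneg a => .nneg (f a)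
  | .top => .top
  | .bot => .bot

/-- The atoms occurring in a literal. -/
def atoms {α : Type} : Lit α → Set α
  | .pos a => {a}
  | .neg a => {a}
  | .nneg a => {a}
  | _ => ∅

end Lit

/-- An objective rule `a₁ ∨ ... ∨ aₙ ← L₁,...,Lₘ`. -/
structure Rule (α : Type) where
  head : Set α
  body : Set (Lit α)

/-- An objective program: a set of rules. -/
abbrev Program (α : Type) := Set (Rule α)

/-- A rule is satisfied by `I` if `I` satisfies some head atom
whenever it satisfies all body literals. -/
def Rule.sat {α : Type} (I : Set α) (r : Rule α) : Prop :=
  (∀ L ∈ r.body, L.sat I) → ∃ a ∈ r.head, a ∈ I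

/-- A model of a program satisfies all its rules. -/
def isModel {α : Type} (I : Set α) (P : Program α) : Prop := ∀ r ∈ P, r.sat I

/-- The reduct of a program with respect to `I`: drop rules with an unsatisfied
negated body literal; delete negated literals from the remaining rules. -/
def reduct {α : Type} (P : Program α) (I : Set α) : Program α :=
  { r' | ∃ r ∈ P, (∀ L ∈ r.body, L.isNeg → L.sat I) ∧
      r' = ⟨r.head, {L | L ∈ r.body ∧ ¬ L.isNeg}⟩ }

/-- `I` is a stable model of `P` iff it is a ⊆-minimal model of the reduct `P^I`. -/
def isStable {α : Type} (P : Program α) (I : Set α) : Prop :=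
  isModel I (reduct P I) ∧ ∀ J ⊆ I, isModel J (reduct P I) → J = I

/-- The set of stable models of a program. -/
def SM {α : Type} (P : Program α) : Set (Set α) := { I | isStable P I }

/-- A program extended with assumption constraints `⊥ ← ¬a` (for `a ∈ Apos`)
and `⊥ ← a` (for `a ∈ Aneg`). -/
def withAssumption {α : Type} (P : Program α) (Apos Aneg : Set α) : Program α :=
  P ∪ ((fun a => (⟨∅, {Lit.neg a}⟩ : Rule α)) '' Apos)
    ∪ ((fun a => (⟨∅, {Lit.pos a}⟩ : Rule α)) '' Aneg)

/-- Stable models of `P` under an assumption. -/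
def SMA {α : Type} (P : Program α) (Apos Aneg : Set α) : Set (Set α) :=
  SM (withAssumption P Apos Aneg)

/-- Literals of epistemic programs: an objective literal, or a subjective
atom `K l` preceded by zero, one, or two negations. -/
inductive SLit (α : Type) : Type
  | obj (l : Lit α)
  | k (l : Lit α)
  | nk (l : Lit α)
  | nnk (l : Lit α)

/-- An epistemic rule. -/
structure ERule (α : Type) where
  head : Set α
  body : Set (SLit α)

/-- An epistemic program: a set of epistemic rules. -/
abbrev EProgram (α : Type) := Set (ERule α)

/-- `W ⊨ K l`: every interpretation in `W` satisfies `l`. -/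
def satK {α : Type} (W : Set (Set α)) (l : Lit α) : Prop := ∀ I ∈ W, l.sat I

open scoped Classical in
/-- Replace a subjective literal by `⊤`/`⊥` according to `W`; objective
literals are unchanged. -/
noncomputable def SLit.reduce {α : Type} (W : Set (Set α)) : SLit α → Lit α
  | .obj l => l
  | .k l => if satK W l then .top else .bot
  | .nk l => if satK W l then .bot else .top
  | .nnk l => if satK W l then .top else .bot

/-- The subjective reduct `P^W`. -/
noncomputable def subjReduct {α : Type} (P : EProgram α) (W : Set (Set α)) : Program α :=
  (fun r : ERule α => (⟨r.head, (SLit.reduce W) '' r.body⟩ : Rule α)) '' P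

/-- A worldview: a non-empty set of interpretations `W` with `W = SM(P^W)`. -/
def isWorldview {α : Type} (P : EProgram α) (W : Set (Set α)) : Prop :=
  W.Nonempty ∧ W = SM (subjReduct P W)

/-- Normal-form subjective literals: `K a`, `¬K a`, `¬¬K a` with `a` an atom. -/
def SLit.isNormal {α : Type} : SLit α → Prop
  | .obj _ => True
  | .k (.pos _) => True
  | .nk (.pos _) => True
  | .nnk (.pos _) => True
  | _ => False

/-- A program is in normal form if negation does not occur in the scope of `K`. -/
def isNormalForm {α : Type} (P : EProgram α) : Prop :=
  ∀ r ∈ P, ∀ L ∈ r.body, L.isNormal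

/-- The atoms `a` such that a subjective atom `K a` occurs in the program; the
corresponding fresh atoms `ka` are represented as `Sum.inr a`. -/
def KAtoms {α : Type} (P : EProgram α) : Set α :=
  { a | ∃ r ∈ P, SLit.k (Lit.pos a) ∈ r.body ∨ SLit.nk (Lit.pos a) ∈ r.body ∨
        SLit.nnk (Lit.pos a) ∈ r.body }

/-- Replace subjective literals on `K a` by objective literals on the fresh
atom `ka = Sum.inr a`; original atoms become `Sum.inl a`. -/
def SLit.t0 {α : Type} : SLit α → Lit (α ⊕ α)
  | .obj l => l.map Sum.inl
  | .k (.pos a) => .pos (Sum.inr a)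
  | .nk (.pos a) => .neg (Sum.inr a)
  | .nnk (.pos a) => .nneg (Sum.inr a)
  | _ => .bot

/-- The tester program `T₀(P)`: `k(P)` plus a choice rule `{ka}`
(i.e. `ka ← ¬¬ka`) for each `ka ∈ K(P)`. -/
def T0 {α : Type} (P : EProgram α) : Program (α ⊕ α) :=
  ((fun r : ERule α => (⟨Sum.inl '' r.head, SLit.t0 '' r.body⟩ : Rule (α ⊕ α))) '' P)
  ∪ ((fun a => (⟨{Sum.inr a}, {Lit.nneg (Sum.inr a)}⟩ : Rule (α ⊕ α))) '' KAtoms P)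

/-- The generator program `G₀(P)`: `T₀(P)` plus consistency constraints
`⊥ ← ka, ¬a` for each `ka ∈ K(P)`. -/
def G0 {α : Type} (P : EProgram α) : Program (α ⊕ α) :=
  T0 P ∪ ((fun a => (⟨∅, {Lit.pos (Sum.inr a), Lit.neg (Sum.inl a)}⟩ : Rule (α ⊕ α))) '' KAtoms P)

/-- `k(M) = M ∩ K(P)`, read as a set of original atoms. -/
def kOfM {α : Type} (M : Set (α ⊕ α)) : Set α := { a | Sum.inr a ∈ M }

/-- `k(W) = {ka ∈ K(P) : W ⊨ K a}`, read as a set of original atoms. -/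
def kOfW {α : Type} (P : EProgram α) (W : Set (Set α)) : Set α :=
  { a | a ∈ KAtoms P ∧ ∀ I ∈ W, a ∈ I }

/-- Restriction of an interpretation to the original atoms `At(P)`. -/
def restr {α : Type} (M : Set (α ⊕ α)) : Set α := { a | Sum.inl a ∈ M }

/-- The positive part of the assumption determined by a set `S` of K-atoms:
`ka` for each `ka ∈ K(P)` with `a ∈ S`. -/
def asmP {α : Type} (P : EProgram α) (S : Set α) : Set (α ⊕ α) := Sum.inr '' (S ∩ KAtoms P)

/-- The negative part of the assumption determined by a set `S` of K-atoms:
`¬ka` for each `ka ∈ K(P)` with `a ∉ S`. -/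
def asmN {α : Type} (P : EProgram α) (S : Set α) : Set (α ⊕ α) := Sum.inr '' (KAtoms P \ S)

/-- A generator program for `P`. -/
def isGenerator {α : Type} (P : EProgram α) (G : Program (α ⊕ α)) : Prop :=
  (∀ W, isWorldview P W → ∃ M ∈ SM G, kOfM M = kOfW P W ∧ restr M ∈ W) ∧
  (∀ M ∈ SM G, ∀ W : Set (Set α), kOfW P W = kOfM M → restr M ∈ SM (subjReduct P W))

/-- A tester program for `P`: a non-empty `W` is a worldview of `P` iff
`W` equals the restriction to `At(P)` of `SM(T; k(W))`. -/
def isTester {α : Type} (P : EProgram α) (T : Program (α ⊕ α)) : Prop :=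
  ∀ W : Set (Set α), W.Nonempty →
    (isWorldview P W ↔ W = restr '' SMA T (asmP P (kOfW P W)) (asmN P (kOfW P W)))

/-- Atoms of the extended signature for the propagation program: original
atoms and `ka`-atoms (left) plus fresh atoms `kp_a`, `kn_a`, `kn_r` (right). -/
abbrev PExt (α : Type) : Type := (α ⊕ α) ⊕ (α ⊕ (α ⊕ ERule α))

/-- An original atom `a` in the extended signature. -/
def aE {α : Type} (a : α) : PExt α := Sum.inl (Sum.inl a)

/-- The atom `ka` in the extended signature. -/
def kaE {α : Type} (a : α) : PExt α := Sum.inl (Sum.inr a)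

/-- The fresh propagation atom `kp_a`. -/
def kpA {α : Type} (a : α) : PExt α := Sum.inr (Sum.inl a)

/-- The fresh propagation atom `kn_a`. -/
def knA {α : Type} (a : α) : PExt α := Sum.inr (Sum.inr (Sum.inl a))

/-- The fresh propagation atom `kn_r` for a rule `r`. -/
def knR {α : Type} (r : ERule α) : PExt α := Sum.inr (Sum.inr (Sum.inr r))

/-- Translation of a body literal for the rules defining `kp_a`. -/
def SLit.kpBody {α : Type} : SLit α → Lit (PExt α)
  | .obj (.pos a) => .pos (kpA a)
  | .obj (.neg a) => .pos (knA a)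
  | .k (.pos a) => .pos (kaE a)
  | .nk (.pos a) => .neg (kaE a)
  | .nnk (.pos a) => .nneg (kaE a)
  | _ => .bot

/-- Translation of a body literal for the rules defining `kn_r`
(the "complement" of the literal). -/
def SLit.knBody {α : Type} : SLit α → Lit (PExt α)
  | .obj (.pos a) => .pos (knA a)
  | .obj (.neg a) => .pos (kpA a)
  | .k (.pos a) => .neg (kaE a)
  | .nk (.pos a) => .pos (kaE a)
  | .nnk (.pos a) => .neg (kaE a)
  | _ => .top

/-- The atoms occurring in a subjective literal. -/
def SLit.atoms {α : Type} : SLit α → Set α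
  | .obj l => l.atoms
  | .k l => l.atoms
  | .nk l => l.atoms
  | .nnk l => l.atoms

/-- The atoms occurring in an epistemic program. -/
def AtE {α : Type} (P : EProgram α) : Set α :=
  { a | ∃ r ∈ P, a ∈ r.head ∨ ∃ L ∈ r.body, a ∈ L.atoms }

/-- The epistemic-propagation program `kp(P)`:
rules `kp_{a} ← ...` for single-atom-head rules, rules `kn_r ← ...` for all
rules, and completion rules `kn_a ← kn_{r₁},...,kn_{rₖ}`. -/
def kpProg {α : Type} (P : EProgram α) : Program (PExt α) :=
  { r' | ∃ r ∈ P, ∃ a : α, r.head = {a} ∧ r' = ⟨{kpA a}, SLit.kpBody '' r.body⟩ }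
  ∪ { r' | ∃ r ∈ P, ∃ L ∈ r.body, r' = ⟨{knR r}, {L.knBody}⟩ }
  ∪ { r' | ∃ a ∈ AtE P,
        r' = ⟨{knA a}, (fun r => Lit.pos (knR r)) '' { r ∈ P | a ∈ r.head }⟩ }

/-- Rename the atoms of a rule. -/
def Rule.mapAtoms {α β : Type} (f : α → β) (r : Rule α) : Rule β :=
  ⟨f '' r.head, (Lit.map f) '' r.body⟩

/-- `G₀(P)` viewed over the extended signature. -/
def G0ext {α : Type} (P : EProgram α) : Program (PExt α) :=
  (Rule.mapAtoms Sum.inl) '' (G0 P)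

/-- The generator program `G₁(P)`: `G₀(P)` together with the propagation
program `kp(P)` and consistency constraints `⊥ ← kp_a, ¬ka`. -/
def G1 {α : Type} (P : EProgram α) : Program (PExt α) :=
  G0ext P ∪ kpProg P
  ∪ { r' | ∃ a ∈ KAtoms P, r' = ⟨∅, {Lit.pos (kpA a), Lit.neg (kaE a)}⟩ }

/-! For `M` whose `ka`-atoms are exactly `k(W)`, every literal of `k(Π)` is read in the reduct
w.r.t. `M` exactly as the corresponding literal of `Π^W` is read in the reduct w.r.t. `M ∩ At(Π)`:
a subjective literal on `K a` becomes `⊤` or `⊥` according to `W`, and `ka` has the same truth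
value in `M`. The choice rules `{ka}` force every model of the reduct below `M` to contain `k(W)`,
and the assumption constraints rule out the `ka` outside `k(W)`. Hence the models of the reduct
of `T₀(Π); k(W)` below `M` correspond to the models of the reduct of `Π^W` below `M ∩ At(Π)`,
and minimality transfers both ways. Stray `ka ∉ K(Π)` in `M` are removed by minimality. -/

/-- `J` satisfies `L` as a body literal of the reduct with respect to `I`. -/
def Lit.satReduct {β : Type} (I J : Set β) (L : Lit β) : Prop :=
  (L.isNeg → L.sat I) ∧ (¬ L.isNeg → L.sat J)

section Reduct

variable {β : Type} {Q Q₁ Q₂ : Program β} {I J : Set β}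

theorem isModel_reduct_iff :
    isModel J (reduct Q I) ↔
      ∀ r ∈ Q, (∀ L ∈ r.body, L.satReduct I J) → ∃ a ∈ r.head, a ∈ J := by
  constructor
  · intro h r hr hbody
    exact h ⟨r.head, {L | L ∈ r.body ∧ ¬ L.isNeg}⟩ ⟨r, hr, fun L hL => (hbody L hL).1, rfl⟩
      fun L hL => (hbody L hL.1).2 hL.2
  · rintro h r' ⟨r, hr, hneg, rfl⟩ hbody
    exact h r hr fun L hL => ⟨hneg L hL, fun hn => hbody L ⟨hL, hn⟩⟩

theorem isModel_reduct_union :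
    isModel J (reduct (Q₁ ∪ Q₂) I) ↔ isModel J (reduct Q₁ I) ∧ isModel J (reduct Q₂ I) := by
  simp only [isModel_reduct_iff, Set.mem_union, or_imp, forall_and]

theorem isModel_reduct_withAssumption {Apos Aneg : Set β} :
    isModel J (reduct (withAssumption Q Apos Aneg) I) ↔
      isModel J (reduct Q I) ∧ Apos ⊆ I ∧ ∀ b ∈ Aneg, b ∉ J := by
  simp only [withAssumption, isModel_reduct_union, and_assoc]
  simp [isModel_reduct_iff, Lit.satReduct, Lit.isNeg, Lit.sat, Set.subset_def]

end Reduct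

section Tester

variable {α : Type} {P : EProgram α} {W : Set (Set α)} {M J : Set (α ⊕ α)}

/-- The objective program `k(Π)`. -/
def kProg (P : EProgram α) : Program (α ⊕ α) :=
  (fun r : ERule α => (⟨Sum.inl '' r.head, SLit.t0 '' r.body⟩ : Rule (α ⊕ α))) '' P

def choiceProg (S : Set α) : Program (α ⊕ α) :=
  (fun a => (⟨{Sum.inr a}, {Lit.nneg (Sum.inr a)}⟩ : Rule (α ⊕ α))) '' S

theorem T0_eq_union (P : EProgram α) : T0 P = kProg P ∪ choiceProg (KAtoms P) := rfl

theorem isModel_reduct_choiceProg {S : Set α} :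
    isModel J (reduct (choiceProg S) M) ↔ ∀ a ∈ S, Sum.inr a ∈ M → Sum.inr a ∈ J := by
  simp [choiceProg, isModel_reduct_iff, Lit.satReduct, Lit.isNeg, Lit.sat]

theorem mem_kOfW_iff_satK {a : α} (ha : a ∈ KAtoms P) : a ∈ kOfW P W ↔ satK W (.pos a) := by
  simp [kOfW, satK, Lit.sat, ha]

theorem SLit.satReduct_t0_iff {L : SLit α} (hL : L.isNormal)
    (hM : ∀ a, L ∈ ({.k (.pos a), .nk (.pos a), .nnk (.pos a)} : Set (SLit α)) →
      (Sum.inr a ∈ M ↔ satK W (.pos a)) ∧ (Sum.inr a ∈ J ↔ satK W (.pos a))) :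
    L.t0.satReduct M J ↔ (L.reduce W).satReduct (restr M) (restr J) := by
  rcases L with l | l | l | l
  · cases l <;> simp [SLit.t0, SLit.reduce, Lit.map, Lit.satReduct, Lit.isNeg, Lit.sat, restr]
  all_goals
    cases l <;> simp only [SLit.isNormal] at hL
    rename_i a
    obtain ⟨hMa, hJa⟩ := hM a (by simp)
    by_cases hW : satK W (.pos a) <;>
      simp [SLit.t0, SLit.reduce, Lit.satReduct, Lit.isNeg, Lit.sat, hW, hMa, hJa]

theorem isModel_reduct_kProg_iff (hnf : isNormalForm P)
    (hM : ∀ a ∈ KAtoms P, (Sum.inr a ∈ M ↔ a ∈ kOfW P W))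
    (hJ : ∀ a ∈ KAtoms P, (Sum.inr a ∈ J ↔ a ∈ kOfW P W)) :
    isModel J (reduct (kProg P) M) ↔ isModel (restr J) (reduct (subjReduct P W) (restr M)) := by
  simp only [isModel_reduct_iff, kProg, subjReduct, Set.forall_mem_image, Set.exists_mem_image]
  refine forall₂_congr fun r hr => imp_congr_left <| forall₂_congr fun L hL => ?_
  refine SLit.satReduct_t0_iff (hnf r hr L hL) fun a haL => ?_
  have ha : a ∈ KAtoms P := ⟨r, hr, by rcases haL with rfl | rfl | rfl <;> simp [hL]⟩
  rw [← mem_kOfW_iff_satK ha]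
  exact ⟨hM a ha, hJ a ha⟩

/-- The program `T₀(Π)` under the assumption `k(W)`. -/
abbrev testerAt (P : EProgram α) (W : Set (Set α)) : Program (α ⊕ α) :=
  withAssumption (T0 P) (asmP P (kOfW P W)) (asmN P (kOfW P W))

theorem isModel_reduct_testerAt_iff (hnf : isNormalForm P)
    (hM : ∀ a ∈ KAtoms P, (Sum.inr a ∈ M ↔ a ∈ kOfW P W))
    (hJ : ∀ a ∈ KAtoms P, Sum.inr a ∈ J → a ∈ kOfW P W) :
    isModel J (reduct (testerAt P W) M) ↔
      (∀ a ∈ kOfW P W, Sum.inr a ∈ J) ∧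
        isModel (restr J) (reduct (subjReduct P W) (restr M)) := by
  have hasmP : asmP P (kOfW P W) ⊆ M := by
    rintro _ ⟨a, ⟨haW, haK⟩, rfl⟩
    exact (hM a haK).2 haW
  have hasmN : ∀ b ∈ asmN P (kOfW P W), b ∉ J := by
    rintro _ ⟨a, ⟨haK, haW⟩, rfl⟩ haJ
    exact haW (hJ a haK haJ)
  have hchoice : (∀ a ∈ KAtoms P, Sum.inr a ∈ M → Sum.inr a ∈ J) ↔
      ∀ a ∈ kOfW P W, Sum.inr a ∈ J :=
    ⟨fun h a ha => h a ha.1 ((hM a ha.1).2 ha), fun h a ha haM => h a ((hM a ha).1 haM)⟩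
  rw [isModel_reduct_withAssumption, T0_eq_union, isModel_reduct_union,
    isModel_reduct_choiceProg, hchoice]
  constructor
  · rintro ⟨⟨hk, hJW⟩, -, -⟩
    exact ⟨hJW, (isModel_reduct_kProg_iff hnf hM fun a ha => ⟨hJ a ha, hJW a⟩).1 hk⟩
  · rintro ⟨hJW, hk⟩
    exact ⟨⟨(isModel_reduct_kProg_iff hnf hM fun a ha => ⟨hJ a ha, hJW a⟩).2 hk, hJW⟩,
      hasmP, hasmN⟩

/-- The interpretation `N ∪ k(W)` of the paper, for `S = k(W)`. -/
def unionK (N S : Set α) : Set (α ⊕ α) := Sum.inl '' N ∪ Sum.inr '' S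

@[simp]
theorem inl_mem_unionK {N S : Set α} {a : α} : Sum.inl a ∈ unionK N S ↔ a ∈ N := by
  simp [unionK]

@[simp]
theorem inr_mem_unionK {N S : Set α} {a : α} : Sum.inr a ∈ unionK N S ↔ a ∈ S := by
  simp [unionK]

@[simp]
theorem restr_unionK (N S : Set α) : restr (unionK N S) = N := by
  ext a
  simp [restr]

theorem eq_unionK_of_mem_SM_testerAt (hnf : isNormalForm P) (hMs : M ∈ SM (testerAt P W)) :
    M = unionK (restr M) (kOfW P W) := by
  obtain ⟨hmod, hmin⟩ := hMs
  obtain ⟨-, hasmP, hasmN⟩ := isModel_reduct_withAssumption.1 hmod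
  have hM : ∀ a ∈ KAtoms P, (Sum.inr a ∈ M ↔ a ∈ kOfW P W) := fun a ha =>
    ⟨fun haM => by_contra fun haW => hasmN _ ⟨a, ⟨ha, haW⟩, rfl⟩ haM,
      fun haW => hasmP ⟨a, ⟨haW, ha⟩, rfl⟩⟩
  have hsub : unionK (restr M) (kOfW P W) ⊆ M := by
    rintro _ (⟨a, ha, rfl⟩ | ⟨a, ha, rfl⟩)
    · exact ha
    · exact (hM a ha.1).2 ha
  refine (hmin _ hsub ?_).symm
  have hMrestr := ((isModel_reduct_testerAt_iff hnf hM fun a ha => (hM a ha).1).1 hmod).2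
  rw [isModel_reduct_testerAt_iff hnf hM fun a _ => inr_mem_unionK.1, restr_unionK]
  exact ⟨fun a => inr_mem_unionK.2, hMrestr⟩

theorem unionK_mem_SM_testerAt_iff (hnf : isNormalForm P) {N : Set α} :
    unionK N (kOfW P W) ∈ SM (testerAt P W) ↔ N ∈ SM (subjReduct P W) := by
  have hM : ∀ a ∈ KAtoms P, (Sum.inr a ∈ unionK N (kOfW P W) ↔ a ∈ kOfW P W) :=
    fun _ _ => inr_mem_unionK
  have hunion : ∀ {N'}, isModel (unionK N' (kOfW P W)) (reduct (testerAt P W) (unionK N (kOfW P W))) ↔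
      isModel N' (reduct (subjReduct P W) N) := by
    intro N'
    rw [isModel_reduct_testerAt_iff hnf hM fun a _ => inr_mem_unionK.1, restr_unionK,
      restr_unionK]
    exact and_iff_right fun a => inr_mem_unionK.2
  refine and_congr hunion ⟨fun hmin J₀ hJ₀N hJ₀ => ?_, fun hmin J hJM hJ => ?_⟩
  · have hsub : unionK J₀ (kOfW P W) ⊆ unionK N (kOfW P W) :=
      Set.union_subset_union_left _ (Set.image_mono hJ₀N)
    simpa using congrArg restr (hmin _ hsub (hunion.2 hJ₀))
  · obtain ⟨hJW, hJrestr⟩ :=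
      (isModel_reduct_testerAt_iff hnf hM fun a _ haJ => inr_mem_unionK.1 (hJM haJ)).1 hJ
    rw [restr_unionK] at hJrestr
    have hJN : restr J = N := hmin _ (fun a ha => inl_mem_unionK.1 (hJM ha)) hJrestr
    refine hJM.antisymm ?_
    rintro _ (⟨a, ha, rfl⟩ | ⟨a, ha, rfl⟩)
    · exact show a ∈ restr J from hJN ▸ ha
    · exact hJW a ha

end Tester

theorem T0_behaves_as_subjective_reduct_general {α : Type} (P : EProgram α)
    (hnf : isNormalForm P) (W : Set (Set α)) :
    SMA (T0 P) (asmP P (kOfW P W)) (asmN P (kOfW P W))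
        = (fun N : Set α => Sum.inl '' N ∪ Sum.inr '' kOfW P W) '' SM (subjReduct P W)
    ∧ SM (subjReduct P W)
        = restr '' SMA (T0 P) (asmP P (kOfW P W)) (asmN P (kOfW P W)) := by
  have hSMA : SMA (T0 P) (asmP P (kOfW P W)) (asmN P (kOfW P W))
      = (unionK · (kOfW P W)) '' SM (subjReduct P W) := by
    ext M
    constructor
    · intro hM
      have hMeq := eq_unionK_of_mem_SM_testerAt hnf hM
      exact ⟨restr M, (unionK_mem_SM_testerAt_iff hnf).1 (hMeq ▸ hM), hMeq.symm⟩
    · rintro ⟨N, hN, rfl⟩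
      exact (unionK_mem_SM_testerAt_iff hnf).2 hN
  refine ⟨hSMA, ?_⟩
  rw [hSMA, Set.image_image]
  simp

/-- the stable models of `T₀(Π)` under the assumption `k(W)` are
exactly the sets `M ∪ k(W)` for `M ∈ SM(Π^W)`; consequently `SM(Π^W)` equals
the restriction of `SM(T₀(Π); k(W))` to the atoms of `Π`. -/
theorem T0_behaves_as_subjective_reduct {α : Type} (P : EProgram α)
    (hfin : P.Finite) (hnf : isNormalForm P) (W : Set (Set α)) :
    SMA (T0 P) (asmP P (kOfW P W)) (asmN P (kOfW P W))
        = (fun N : Set α => Sum.inl '' N ∪ Sum.inr '' kOfW P W) '' SM (subjReduct P W)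
    ∧ SM (subjReduct P W)
        = restr '' SMA (T0 P) (asmP P (kOfW P W)) (asmN P (kOfW P W)) :=
  T0_behaves_as_subjective_reduct_general P hnf W
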